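/- arXiv:1306.3087 — 2 statements merged into one kernel-verified Lean document; each statement's English description precedes it below -/
import Mathlib

section
/- Every finite connected simple graph that contains no induced 4-cycle C_4 and no induced path P_3 (the path with 3 edges) has a vertex adjacent to every other vertex (a dominating vertex). -/
/-!
Take a vertex `z` of maximum degree. If some neighbour `w` of `z` had a neighbour `v ∉ N[z]`,
then every other neighbour `u` of `z` is adjacent to `w`, since otherwise `u - z - w - v` induces
a `P_3` (if `u ≁ v`) or a `C_4` (if `u ∼ v`). Hence `N(w) ⊇ (N(z) \ {w}) ∪ {z, v}` and `w` has
larger degree than `z`. So `N[z]` is closed under adjacency, and by connectivity it is everything.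
-/

namespace SimpleGraph

variable {V : Type*} {G : SimpleGraph V}

theorem injective_vecCons_four {α : Type*} {a b c d : α} (hab : a ≠ b) (hac : a ≠ c)
    (had : a ≠ d) (hbc : b ≠ c) (hbd : b ≠ d) (hcd : c ≠ d) :
    Function.Injective ![a, b, c, d] := by
  intro i j h
  fin_cases i <;> fin_cases j <;> simp_all [eq_comm]

theorem nonempty_pathGraph_four_embedding {a b c d : V} (hab : G.Adj a b) (hbc : G.Adj b c)
    (hcd : G.Adj c d) (hac : ¬G.Adj a c) (hbd : ¬G.Adj b d) (had : ¬G.Adj a d) (hac' : a ≠ c)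
    (hbd' : b ≠ d) : Nonempty (pathGraph 4 ↪g G) := by
  have had' : a ≠ d := fun h => hbd (h ▸ hab.symm)
  refine ⟨⟨⟨![a, b, c, d], injective_vecCons_four hab.ne hac' had' hbc.ne hbd' hcd.ne⟩, ?_⟩⟩
  intro i j
  fin_cases i <;> fin_cases j <;>
    simp [pathGraph_adj, hab, hbc, hcd, hab.symm, hbc.symm, hcd.symm, hac, hbd, had, G.adj_comm]

theorem nonempty_cycleGraph_four_embedding {a b c d : V} (hab : G.Adj a b) (hbc : G.Adj b c)
    (hcd : G.Adj c d) (hac : ¬G.Adj a c) (hbd : ¬G.Adj b d) (had : G.Adj a d) (hac' : a ≠ c)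
    (hbd' : b ≠ d) : Nonempty (cycleGraph 4 ↪g G) := by
  refine ⟨⟨⟨![a, b, c, d], injective_vecCons_four hab.ne hac' had.ne hbc.ne hbd' hcd.ne⟩, ?_⟩⟩
  intro i j
  fin_cases i <;> fin_cases j <;>
    simp [cycleGraph_adj, hab, hbc, hcd, had, hab.symm, hbc.symm, hcd.symm, had.symm, hac, hbd,
      G.adj_comm] <;> decide

def IsThinChordal (G : SimpleGraph V) : Prop :=
  IsEmpty (cycleGraph 4 ↪g G) ∧ IsEmpty (pathGraph 4 ↪g G)

theorem IsThinChordal.adj_of_adj_of_adj_of_adj (hG : G.IsThinChordal) {a b c d : V}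
    (hab : G.Adj a b) (hbc : G.Adj b c) (hcd : G.Adj c d) (hbd : ¬G.Adj b d) (hac' : a ≠ c)
    (hbd' : b ≠ d) : G.Adj a c := by
  by_contra hac
  by_cases had : G.Adj a d
  · exact hG.1.false (nonempty_cycleGraph_four_embedding hab hbc hcd hac hbd had hac' hbd').some
  · exact hG.2.false (nonempty_pathGraph_four_embedding hab hbc hcd hac hbd had hac' hbd').some

theorem degree_lt_degree_of_adj_of_forall_adj [G.LocallyFinite] {z w v : V} (hzw : G.Adj z w)
    (hN : ∀ u, G.Adj z u → u ≠ w → G.Adj w u) (hwv : G.Adj w v) (hzv : ¬G.Adj z v)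
    (hvz : v ≠ z) : G.degree z < G.degree w := by
  classical
  set S := insert z ((G.neighborFinset z).erase w)
  have hS : S ⊆ G.neighborFinset w := by
    intro u hu
    simp only [S, Finset.mem_insert, Finset.mem_erase, mem_neighborFinset] at hu ⊢
    rcases hu with rfl | ⟨huw, hzu⟩
    exacts [hzw.symm, hN u hzu huw]
  have hvS : v ∉ S := by simp [S, hvz, hzv]
  calc G.degree z = S.card := by
        rw [Finset.card_insert_of_notMem (by simp), Finset.card_erase_of_mem (by simpa using hzw),
          card_neighborFinset_eq_degree,
          Nat.sub_add_cancel ((G.degree_pos_iff_exists_adj z).2 ⟨w, hzw⟩)]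
    _ < (G.neighborFinset w).card :=
        Finset.card_lt_card ((Finset.ssubset_iff_of_subset hS).2 ⟨v, by simpa using hwv, hvS⟩)
    _ = G.degree w := card_neighborFinset_eq_degree G w

theorem IsThinChordal.adj_of_adj_of_adj_of_forall_degree_le [G.LocallyFinite]
    (hG : G.IsThinChordal) {z w v : V} (hz : ∀ x, G.degree x ≤ G.degree z) (hzw : G.Adj z w)
    (hwv : G.Adj w v) (hvz : v ≠ z) : G.Adj z v := by
  by_contra hzv
  have hN : ∀ u, G.Adj z u → u ≠ w → G.Adj w u := fun u hzu huw =>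
    (hG.adj_of_adj_of_adj_of_adj hzu.symm hzw hwv hzv huw hvz.symm).symm
  exact (hz w).not_gt (degree_lt_degree_of_adj_of_forall_adj hzw hN hwv hzv hvz)

theorem Preconnected.forall_of_adj_closed (hG : G.Preconnected) {P : V → Prop} {u : V}
    (hu : P u) (hP : ∀ x y, G.Adj x y → P x → P y) (v : V) : P v := by
  obtain ⟨p⟩ := hG u v
  induction p with
  | nil => exact hu
  | cons hadj _ ih => exact ih (hP _ _ hadj hu)

end SimpleGraph

/-- Every finite connected simple graph containing no induced 4-cycle C_4 and
no induced path P_3 (the path with 3 edges, i.e. `SimpleGraph.pathGraph 4` on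
4 vertices) has a vertex adjacent to every other vertex. -/
theorem thinChordal_connected_has_dominating_vertex {V : Type*} [Fintype V]
    (G : SimpleGraph V) (hconn : G.Connected)
    (hC4 : IsEmpty (SimpleGraph.cycleGraph 4 ↪g G))
    (hP3 : IsEmpty (SimpleGraph.pathGraph 4 ↪g G)) :
    ∃ z : V, ∀ v : V, v ≠ z → G.Adj z v := by
  classical
  have hG : G.IsThinChordal := ⟨hC4, hP3⟩
  have := hconn.nonempty
  obtain ⟨z, hz⟩ := G.exists_maximal_degree_vertex
  have hmax : ∀ x, G.degree x ≤ G.degree z := fun x => hz ▸ G.degree_le_maxDegree x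
  have hclosedNbhd : ∀ v, v = z ∨ G.Adj z v := by
    refine hconn.preconnected.forall_of_adj_closed (Or.inl rfl) fun x y hxy hx => ?_
    rcases hx with rfl | hzx
    · exact Or.inr hxy
    · exact or_iff_not_imp_left.2 fun hyz =>
        hG.adj_of_adj_of_adj_of_forall_degree_le hmax hzx hxy hyz
  exact ⟨z, fun v hvz => (hclosedNbhd v).resolve_left hvz⟩
end

section
/- Any two reduced words representing the same element of a right-angled Artin group G(Γ) have the same length and involve the same set of generators (the same set of letters occurring, ignoring signs). -/
open scoped commutatorElement

/-- The defining relators of the right-angled Artin group of a graph `G`: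
commutators of pairs of adjacent vertices. -/
def raagRels {V : Type*} (G : SimpleGraph V) : Set (FreeGroup V) :=
  {r | ∃ x y : V, G.Adj x y ∧ r = ⁅FreeGroup.of x, FreeGroup.of y⁆}

/-- The right-angled Artin group (partially commutative group) of a graph. -/
abbrev Raag {V : Type*} (G : SimpleGraph V) : Type _ := PresentedGroup (raagRels G)

/-- The canonical generator of a RAAG corresponding to a vertex. -/
def Raag.gen {V : Type*} (G : SimpleGraph V) (x : V) : Raag G := PresentedGroup.of x

/-- Evaluate a word in the generators (a list of vertices with signs) in the
right-angled Artin group of `G`. -/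
def evalWord {V : Type*} (G : SimpleGraph V) (w : List (V × Bool)) : Raag G :=
  (w.map (fun p => if p.2 then Raag.gen G p.1 else (Raag.gen G p.1)⁻¹)).prod

/-- A word is reduced in G(Γ) if it has minimal length among all words
representing the same element. -/
def IsReducedWord {V : Type*} (G : SimpleGraph V) (w : List (V × Bool)) : Prop :=
  ∀ w' : List (V × Bool), evalWord G w' = evalWord G w → w.length ≤ w'.length

/-!
For a set `S` of vertices, sending the generators outside `S` to `1` respects the commutator
relations, so it defines a retraction of `G(Γ)` whose effect on a word is to delete its letters
outside `S`. Taking `S` to be the support of one word representing an element, this retraction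
fixes the element and shortens any other representative that uses a letter outside `S`; hence a
reduced representative has no such letter. Equal length of reduced words is immediate from
minimality.
-/

section

variable {V : Type*} (G : SimpleGraph V)

namespace Raag

theorem commutator_gen_eq_one {x y : V} (hxy : G.Adj x y) : ⁅gen G x, gen G y⁆ = 1 := by
  have h := PresentedGroup.one_of_mem (rels := raagRels G) ⟨x, y, hxy, rfl⟩
  rwa [map_commutatorElement] at h

def retraction (p : V → Prop) [DecidablePred p] : Raag G →* Raag G :=
  PresentedGroup.toGroup (f := fun v => if p v then gen G v else 1) <| by
    rintro _ ⟨x, y, hxy, rfl⟩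
    simp only [map_commutatorElement, FreeGroup.lift_apply_of]
    split_ifs
    · exact commutator_gen_eq_one G hxy
    all_goals simp [commutatorElement_def]

theorem retraction_gen (p : V → Prop) [DecidablePred p] (x : V) :
    retraction G p (gen G x) = if p x then gen G x else 1 :=
  PresentedGroup.toGroup.of _

end Raag

theorem evalWord_cons (a : V × Bool) (w : List (V × Bool)) :
    evalWord G (a :: w) =
      (if a.2 then Raag.gen G a.1 else (Raag.gen G a.1)⁻¹) * evalWord G w := by
  simp [evalWord]

theorem retraction_evalWord (p : V → Prop) [DecidablePred p] (w : List (V × Bool)) :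
    Raag.retraction G p (evalWord G w) = evalWord G (w.filter fun a => p a.1) := by
  induction w with
  | nil => simp [evalWord]
  | cons a w ih =>
    by_cases ha : p a.1
    · rw [List.filter_cons_of_pos (by simpa using ha), evalWord_cons, evalWord_cons, map_mul, ih]
      cases a.2 <;> simp [Raag.retraction_gen, ha]
    · rw [List.filter_cons_of_neg (by simpa using ha), evalWord_cons, map_mul, ih]
      cases a.2 <;> simp [Raag.retraction_gen, ha]

theorem IsReducedWord.support_subset {w w' : List (V × Bool)} (hw : IsReducedWord G w)
    (h : evalWord G w = evalWord G w') :
    {x : V | ∃ b, (x, b) ∈ w} ⊆ {x : V | ∃ b, (x, b) ∈ w'} := by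
  classical
  let p : V → Prop := fun x => ∃ b, (x, b) ∈ w'
  have hw' : w'.filter (fun a => p a.1) = w' :=
    List.filter_eq_self.2 fun a ha => decide_eq_true ⟨a.2, ha⟩
  have heval : evalWord G (w.filter fun a => p a.1) = evalWord G w := by
    rw [← retraction_evalWord, h, retraction_evalWord, hw']
  have hfilter : (w.filter fun a => p a.1).length = w.length :=
    le_antisymm (List.length_filter_le _ _) (hw _ heval)
  rintro x ⟨b, hxb⟩
  simpa [p] using List.length_filter_eq_length_iff.1 hfilter _ hxb

end

/-- Any two reduced words representing the same element of a right-angled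
Artin group have the same length and involve the same set of generators. -/
theorem reduced_words_same_length_and_support {V : Type*} (G : SimpleGraph V)
    (w₁ w₂ : List (V × Bool)) (h₁ : IsReducedWord G w₁) (h₂ : IsReducedWord G w₂)
    (h : evalWord G w₁ = evalWord G w₂) :
    w₁.length = w₂.length ∧
    {x : V | ∃ b, (x, b) ∈ w₁} = {x : V | ∃ b, (x, b) ∈ w₂} :=
  ⟨le_antisymm (h₁ w₂ h.symm) (h₂ w₁ h),
    (h₁.support_subset G h).antisymm (h₂.support_subset G h.symm)⟩
end
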